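/- arXiv:math/0607550 — 2 statements merged into one kernel-verified Lean document; each statement's English description precedes it below -/
import Mathlib

section
/- Let M(v) = exp(-|v|²) on R^N with N ≥ 1, let γ ≥ 0, and let φ : R^N → R be measurable such that all integrals below are finite. Then ∫∫ |φ(x)-φ(y)|² |x-y|^γ M(x) M(y) dx dy ≥ K_γ ∫∫ |φ(x)-φ(y)|² M(x) M(y) dx dy, where K_γ = (1/(4∫M)) · inf_{x,y ∈ R^N} ∫ min{|x-z|^γ, |z-y|^γ} M(z) dz. -/
/-!
Since `(a - b)² ≤ 2 (a - c)² + 2 (c - b)²`, for every `z`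
`min(w(x,z), w(z,y)) |φ x - φ y|² ≤ 2 w(x,z) |φ x - φ z|² + 2 w(z,y) |φ z - φ y|²`.
Integrating in `z` against `M`, the left side becomes `J(x,y) |φ x - φ y|²` with
`J(x,y) ≥ inf J`, and the right side two marginals of the weighted energy; integrating again
against `M x M y`, each marginal contributes `∫ M` times the weighted energy, whence the
factor `4 ∫ M`.
-/

open Real MeasureTheory

theorem min_mul_sq_sub_le {a b : ℝ} (ha : 0 ≤ a) (hb : 0 ≤ b) (s t u : ℝ) :
    min a b * (s - t) ^ 2 ≤ 2 * (s - u) ^ 2 * a + 2 * (u - t) ^ 2 * b := by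
  have hsq : (s - t) ^ 2 ≤ 2 * (s - u) ^ 2 + 2 * (u - t) ^ 2 := by
    nlinarith [sq_nonneg (s + t - 2 * u)]
  calc min a b * (s - t) ^ 2 ≤ min a b * (2 * (s - u) ^ 2 + 2 * (u - t) ^ 2) :=
        mul_le_mul_of_nonneg_left hsq (le_min ha hb)
    _ ≤ 2 * (s - u) ^ 2 * a + 2 * (u - t) ^ 2 * b := by
        nlinarith [min_le_left a b, min_le_right a b, sq_nonneg (s - u), sq_nonneg (u - t)]

namespace MeasureTheory

variable {X : Type*} [MeasurableSpace X] {μ : Measure X} {w : X → X → ℝ} {φ M : X → ℝ}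

theorem integral_min_mul_mul_sq_sub_le (hw : ∀ x y, 0 ≤ w x y) (hM : ∀ x, 0 ≤ M x) {x y : X}
    (hx : Integrable (fun z => (φ x - φ z) ^ 2 * w x z * M x * M z) μ)
    (hy : Integrable (fun z => (φ z - φ y) ^ 2 * w z y * M z * M y) μ) :
    (∫ z, min (w x z) (w z y) * M z ∂μ) * ((φ x - φ y) ^ 2 * M x * M y) ≤
      2 * ((∫ z, (φ x - φ z) ^ 2 * w x z * M x * M z ∂μ) * M y +
        M x * ∫ z, (φ z - φ y) ^ 2 * w z y * M z * M y ∂μ) := by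
  have hrhs := ((hx.mul_const (M y)).add (hy.const_mul (M x))).const_mul 2
  rw [← integral_mul_const, ← integral_mul_const, ← integral_const_mul,
    ← integral_add (hx.mul_const _) (hy.const_mul _), ← integral_const_mul]
  refine integral_mono_of_nonneg (.of_forall fun z => ?_) hrhs (.of_forall fun z => ?_)
  · have := le_min (hw x z) (hw z y)
    have := hM x; have := hM y; have := hM z
    positivity
  · have hxyz : 0 ≤ M x * M y * M z := by have := hM x; have := hM y; have := hM z; positivity
    have := mul_le_mul_of_nonneg_right
      (min_mul_sq_sub_le (hw x z) (hw z y) (φ x) (φ y) (φ z)) hxyz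
    linarith

variable [SFinite μ]

theorem mul_integral_sq_sub_le {c : ℝ} (hw : ∀ x y, 0 ≤ w x y) (hM : ∀ x, 0 ≤ M x)
    (hMi : Integrable M μ)
    (hf : Integrable (fun p : X × X => (φ p.1 - φ p.2) ^ 2 * w p.1 p.2 * M p.1 * M p.2)
      (μ.prod μ))
    (hc₀ : 0 ≤ c) (hc : ∀ x y, c ≤ ∫ z, min (w x z) (w z y) * M z ∂μ) :
    c * ∫ p, (φ p.1 - φ p.2) ^ 2 * M p.1 * M p.2 ∂μ.prod μ ≤
      4 * (∫ z, M z ∂μ) * ∫ p, (φ p.1 - φ p.2) ^ 2 * w p.1 p.2 * M p.1 * M p.2 ∂μ.prod μ := by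
  set f : X → X → ℝ := fun x y => (φ x - φ y) ^ 2 * w x y * M x * M y
  have hf' : Integrable (Function.uncurry f) (μ.prod μ) := hf
  set G₁ : X → ℝ := fun x => ∫ z, f x z ∂μ
  set G₂ : X → ℝ := fun y => ∫ z, f z y ∂μ
  have hG₁ : Integrable G₁ μ := hf.integral_prod_left
  have hG₂ : Integrable G₂ μ := hf.integral_prod_right
  have hF := ((hG₁.mul_prod hMi).add (hMi.mul_prod hG₂)).const_mul 2
  have hpointwise : ∀ᵐ p ∂μ.prod μ, c * ((φ p.1 - φ p.2) ^ 2 * M p.1 * M p.2) ≤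
      2 * (G₁ p.1 * M p.2 + M p.1 * G₂ p.2) := by
    filter_upwards [Measure.quasiMeasurePreserving_fst.ae hf.prod_right_ae,
      Measure.quasiMeasurePreserving_snd.ae hf.prod_left_ae] with p hx hy
    have hg : 0 ≤ (φ p.1 - φ p.2) ^ 2 * M p.1 * M p.2 := by
      have := hM p.1; have := hM p.2; positivity
    exact (mul_le_mul_of_nonneg_right (hc p.1 p.2) hg).trans
      (integral_min_mul_mul_sq_sub_le hw hM hx hy)
  calc c * ∫ p, (φ p.1 - φ p.2) ^ 2 * M p.1 * M p.2 ∂μ.prod μ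
      = ∫ p, c * ((φ p.1 - φ p.2) ^ 2 * M p.1 * M p.2) ∂μ.prod μ := (integral_const_mul _ _).symm
    _ ≤ ∫ p, 2 * (G₁ p.1 * M p.2 + M p.1 * G₂ p.2) ∂μ.prod μ := by
      refine integral_mono_of_nonneg (.of_forall fun p => ?_) hF hpointwise
      have := hM p.1; have := hM p.2; positivity
    _ = 2 * ((∫ x, G₁ x ∂μ) * (∫ z, M z ∂μ) + (∫ z, M z ∂μ) * ∫ y, G₂ y ∂μ) := by
      rw [integral_const_mul, integral_add (hG₁.mul_prod hMi) (hMi.mul_prod hG₂),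
        integral_prod_mul, integral_prod_mul]
    _ = 4 * (∫ z, M z ∂μ) * ∫ p, f p.1 p.2 ∂μ.prod μ := by
      rw [← integral_integral_swap hf', integral_integral hf']
      ring

theorem one_div_mul_iInf_mul_integral_sq_sub_le (hw : ∀ x y, 0 ≤ w x y) (hM : ∀ x, 0 ≤ M x)
    (hf : Integrable (fun p : X × X => (φ p.1 - φ p.2) ^ 2 * w p.1 p.2 * M p.1 * M p.2)
      (μ.prod μ)) :
    1 / (4 * ∫ z, M z ∂μ) * (⨅ p : X × X, ∫ z, min (w p.1 z) (w z p.2) * M z ∂μ) *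
        ∫ p, (φ p.1 - φ p.2) ^ 2 * M p.1 * M p.2 ∂μ.prod μ ≤
      ∫ p, (φ p.1 - φ p.2) ^ 2 * w p.1 p.2 * M p.1 * M p.2 ∂μ.prod μ := by
  have hJ : ∀ p : X × X, 0 ≤ ∫ z, min (w p.1 z) (w z p.2) * M z ∂μ := fun p =>
    integral_nonneg fun z => mul_nonneg (le_min (hw _ _) (hw _ _)) (hM z)
  have hE : 0 ≤ ∫ p, (φ p.1 - φ p.2) ^ 2 * w p.1 p.2 * M p.1 * M p.2 ∂μ.prod μ :=
    integral_nonneg fun p => by have := hw p.1 p.2; have := hM p.1; have := hM p.2; positivity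
  by_cases hm : Integrable M μ ∧ 0 < ∫ z, M z ∂μ
  · obtain ⟨hMi, hm_pos⟩ := hm
    have := mul_integral_sq_sub_le (φ := φ) hw hM hMi hf (Real.iInf_nonneg hJ)
      fun x y => ciInf_le ⟨0, Set.forall_mem_range.2 hJ⟩ (x, y)
    rw [one_div_mul_eq_div, div_mul_eq_mul_div, div_le_iff₀ (by positivity)]
    linarith
  · -- `∫ M = 0`, either genuinely or as the junk value of a non-integrable `M`
    have hm0 : ∫ z, M z ∂μ = 0 := by
      by_cases hMi : Integrable M μ
      · exact le_antisymm (not_lt.1 fun h => hm ⟨hMi, h⟩) (integral_nonneg hM)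
      · exact integral_undef hMi
    simpa [hm0] using hE

end MeasureTheory

theorem gaussian_coercivity_reduction_general (N : ℕ) (γ : ℝ)
    (φ : EuclideanSpace ℝ (Fin N) → ℝ)
    (M : EuclideanSpace ℝ (Fin N) → ℝ)
    (hM : ∀ v, M v = Real.exp (-‖v‖ ^ 2))
    (h1 : Integrable (fun p : EuclideanSpace ℝ (Fin N) × EuclideanSpace ℝ (Fin N) =>
      (φ p.1 - φ p.2) ^ 2 * ‖p.1 - p.2‖ ^ γ * M p.1 * M p.2))
    (Kγ : ℝ)
    (hK : Kγ = (1 / (4 * ∫ v, M v)) *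
      ⨅ p : EuclideanSpace ℝ (Fin N) × EuclideanSpace ℝ (Fin N),
        ∫ z, min (‖p.1 - z‖ ^ γ) (‖z - p.2‖ ^ γ) * M z) :
    (∫ p : EuclideanSpace ℝ (Fin N) × EuclideanSpace ℝ (Fin N),
        (φ p.1 - φ p.2) ^ 2 * ‖p.1 - p.2‖ ^ γ * M p.1 * M p.2) ≥
      Kγ * ∫ p : EuclideanSpace ℝ (Fin N) × EuclideanSpace ℝ (Fin N),
        (φ p.1 - φ p.2) ^ 2 * M p.1 * M p.2 := by
  have hM₀ : ∀ v, 0 ≤ M v := fun v => hM v ▸ (exp_pos _).le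
  rw [hK, ge_iff_le]
  exact one_div_mul_iInf_mul_integral_sq_sub_le (w := fun x y => ‖x - y‖ ^ γ)
    (fun _ _ => rpow_nonneg (norm_nonneg _) γ) hM₀ h1

theorem gaussian_coercivity_reduction (N : ℕ) (hN : 1 ≤ N) (γ : ℝ) (hγ : 0 ≤ γ)
    (φ : EuclideanSpace ℝ (Fin N) → ℝ) (hφ : Measurable φ)
    (M : EuclideanSpace ℝ (Fin N) → ℝ)
    (hM : ∀ v, M v = Real.exp (-‖v‖ ^ 2))
    (h1 : Integrable (fun p : EuclideanSpace ℝ (Fin N) × EuclideanSpace ℝ (Fin N) =>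
      (φ p.1 - φ p.2) ^ 2 * ‖p.1 - p.2‖ ^ γ * M p.1 * M p.2))
    (h2 : Integrable (fun p : EuclideanSpace ℝ (Fin N) × EuclideanSpace ℝ (Fin N) =>
      (φ p.1 - φ p.2) ^ 2 * M p.1 * M p.2))
    (Kγ : ℝ)
    (hK : Kγ = (1 / (4 * ∫ v, M v)) *
      ⨅ p : EuclideanSpace ℝ (Fin N) × EuclideanSpace ℝ (Fin N),
        ∫ z, min (‖p.1 - z‖ ^ γ) (‖z - p.2‖ ^ γ) * M z) :
    (∫ p : EuclideanSpace ℝ (Fin N) × EuclideanSpace ℝ (Fin N),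
        (φ p.1 - φ p.2) ^ 2 * ‖p.1 - p.2‖ ^ γ * M p.1 * M p.2) ≥
      Kγ * ∫ p : EuclideanSpace ℝ (Fin N) × EuclideanSpace ℝ (Fin N),
        (φ p.1 - φ p.2) ^ 2 * M p.1 * M p.2 :=
  gaussian_coercivity_reduction_general N γ φ M hM h1 Kγ hK
end

section
/- For γ ≥ 0 and M(v) = e^{-|v|²} on R^N, the constant K_γ = (1/(4∫M)) inf_{x,y} ∫ min{|x-z|^γ, |z-y|^γ} M(z) dz is strictly positive. -/
/-!
The Gaussian density is at most `1`, so a ball of radius `r` has Gaussian mass at most its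
volume, which is `O(r ^ N)` uniformly in the centre. Fix `r` so that every such ball carries at
most a quarter of the total mass `∫ M`. Outside the two balls of radius `r` around `x` and `y`
the integrand is at least `r ^ γ * M`, so the integral is at least `r ^ γ * (∫ M) / 2` for every
pair `(x, y)`.
-/

open Real MeasureTheory Metric Set Filter Topology Module

lemma rpow_le_exp_mul {a γ : ℝ} (ha : 0 ≤ a) (hγ : 0 ≤ γ) : a ^ γ ≤ exp (γ * a) :=
  calc a ^ γ ≤ exp a ^ γ :=
        rpow_le_rpow ha ((le_add_of_nonneg_right zero_le_one).trans (add_one_le_exp a)) hγ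
    _ = exp (γ * a) := by rw [mul_comm, exp_mul]

section FarFromTwoPoints

variable {E : Type*} [SeminormedAddCommGroup E] {γ r : ℝ} {w : E → ℝ}

lemma rpow_mul_sub_indicator_ball_le_min_rpow_mul (hγ : 0 ≤ γ) (hr : 0 ≤ r) (hw : 0 ≤ w)
    (x y z : E) :
    r ^ γ * (w z - (ball x r).indicator w z - (ball y r).indicator w z) ≤
      min (‖x - z‖ ^ γ) (‖z - y‖ ^ γ) * w z := by
  have hmin : 0 ≤ min (‖x - z‖ ^ γ) (‖z - y‖ ^ γ) * w z :=
    mul_nonneg (le_min (rpow_nonneg (norm_nonneg _) γ) (rpow_nonneg (norm_nonneg _) γ)) (hw z)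
  by_cases hx : z ∈ ball x r
  · by_cases hy : z ∈ ball y r
    · simp only [indicator_of_mem hx, indicator_of_mem hy]
      nlinarith [mul_nonneg (rpow_nonneg hr γ) (hw z)]
    · simpa [indicator_of_mem hx, indicator_of_notMem hy] using hmin
  · by_cases hy : z ∈ ball y r
    · simpa [indicator_of_notMem hx, indicator_of_mem hy] using hmin
    · have hxz : r ≤ ‖x - z‖ := by simpa [dist_eq_norm, norm_sub_rev] using hx
      have hzy : r ≤ ‖z - y‖ := by simpa [dist_eq_norm] using hy
      rw [indicator_of_notMem hx, indicator_of_notMem hy, sub_zero, sub_zero]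
      exact mul_le_mul_of_nonneg_right
        (le_min (rpow_le_rpow hr hxz hγ) (rpow_le_rpow hr hzy hγ)) (hw z)

variable [MeasurableSpace E] [OpensMeasurableSpace E]

lemma rpow_mul_sub_setIntegral_ball_le_integral_min_rpow_mul (μ : Measure E) (hγ : 0 ≤ γ)
    (hr : 0 ≤ r) (hw : 0 ≤ w) (hwi : Integrable w μ) (x y : E)
    (hi : Integrable (fun z => min (‖x - z‖ ^ γ) (‖z - y‖ ^ γ) * w z) μ) :
    r ^ γ * ((∫ z, w z ∂μ) - (∫ z in ball x r, w z ∂μ) - ∫ z in ball y r, w z ∂μ) ≤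
      ∫ z, min (‖x - z‖ ^ γ) (‖z - y‖ ^ γ) * w z ∂μ := by
  have hx := hwi.indicator (measurableSet_ball (x := x) (ε := r))
  have hy := hwi.indicator (measurableSet_ball (x := y) (ε := r))
  calc r ^ γ * ((∫ z, w z ∂μ) - (∫ z in ball x r, w z ∂μ) - ∫ z in ball y r, w z ∂μ)
      = ∫ z, r ^ γ * (w z - (ball x r).indicator w z - (ball y r).indicator w z) ∂μ := by
        rw [integral_const_mul, integral_sub (f := fun z => w z - (ball x r).indicator w z)
          (hwi.sub hx) hy, integral_sub hwi hx, integral_indicator measurableSet_ball,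
          integral_indicator measurableSet_ball]
    _ ≤ _ := integral_mono (((hwi.sub hx).sub hy).const_mul _) hi
        (rpow_mul_sub_indicator_ball_le_min_rpow_mul hγ hr hw x y)

end FarFromTwoPoints

section SmallBalls

variable {E : Type*} [NormedAddCommGroup E] [NormedSpace ℝ E] [FiniteDimensional ℝ E]
  [Nontrivial E] [MeasurableSpace E] [BorelSpace E] (μ : Measure E) [μ.IsAddHaarMeasure]

lemma exists_pos_forall_addHaar_real_ball_lt {ε : ℝ} (hε : 0 < ε) :
    ∃ r > 0, ∀ x : E, μ.real (ball x r) < ε := by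
  have hlim : Tendsto (fun r : ℝ => r ^ finrank ℝ E * μ.real (ball (0 : E) 1)) (𝓝[>] 0) (𝓝 0) :=
    tendsto_nhdsWithin_of_tendsto_nhds <| by
      simpa [zero_pow finrank_pos.ne'] using
        (Continuous.tendsto (f := fun r : ℝ => r ^ finrank ℝ E * μ.real (ball (0 : E) 1))
          (by fun_prop) 0)
  obtain ⟨r, hsmall, hr⟩ := ((hlim.eventually (gt_mem_nhds hε)).and self_mem_nhdsWithin).exists
  refine ⟨r, hr, fun x => ?_⟩
  rwa [measureReal_def, Measure.addHaar_ball μ x hr.le, ENNReal.toReal_mul,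
    ENNReal.toReal_ofReal (by positivity)]

end SmallBalls

section Gaussian

lemma setIntegral_exp_neg_sq_norm_le_measureReal {E : Type*} [SeminormedAddCommGroup E]
    [MeasurableSpace E] {μ : Measure E} {s : Set E} (hs : μ s < ⊤) :
    ∫ z in s, exp (-‖z‖ ^ 2) ∂μ ≤ μ.real s := by
  refine (Real.le_norm_self _).trans
    ((norm_setIntegral_le_of_norm_le_const hs fun z _ => ?_).trans_eq (one_mul _))
  rw [norm_of_nonneg (exp_pos _).le, exp_le_one_iff, neg_nonpos]
  positivity

variable {V : Type*} [NormedAddCommGroup V] [InnerProductSpace ℝ V] [FiniteDimensional ℝ V]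
  [MeasurableSpace V] [BorelSpace V]

lemma integral_exp_neg_sq_norm_pos : 0 < ∫ v : V, exp (-‖v‖ ^ 2) := by
  have h := GaussianFourier.integral_rexp_neg_mul_sq_norm (V := V) one_pos
  simp only [neg_one_mul, div_one] at h
  exact h ▸ by positivity

lemma integrable_exp_neg_mul_sq_norm {b : ℝ} (hb : 0 < b) :
    Integrable fun v : V => exp (-b * ‖v‖ ^ 2) :=
  .of_integral_ne_zero (GaussianFourier.integral_rexp_neg_mul_sq_norm (V := V) hb ▸ by positivity)

lemma integrable_rpow_norm_sub_mul_exp_neg_sq_norm {γ : ℝ} (hγ : 0 ≤ γ) (x : V) :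
    Integrable fun z : V => ‖x - z‖ ^ γ * exp (-‖z‖ ^ 2) := by
  refine ((integrable_exp_neg_mul_sq_norm one_half_pos).const_mul
    (exp (γ * ‖x‖ + γ ^ 2 / 2))).mono' (by fun_prop) (.of_forall fun z => ?_)
  rw [norm_of_nonneg (by positivity), ← exp_add]
  calc ‖x - z‖ ^ γ * exp (-‖z‖ ^ 2) ≤ exp (γ * ‖x - z‖) * exp (-‖z‖ ^ 2) := by
        gcongr; exact rpow_le_exp_mul (norm_nonneg _) hγ
    _ ≤ _ := by
        rw [← exp_add]
        -- `γ * ‖z‖ ≤ (γ ^ 2 + ‖z‖ ^ 2) / 2` leaves half of the Gaussian decay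
        exact exp_le_exp.2 (by nlinarith [sq_nonneg (γ - ‖z‖), norm_sub_le x z])

lemma integrable_min_rpow_norm_sub_mul_exp_neg_sq_norm {γ : ℝ} (hγ : 0 ≤ γ) (x y : V) :
    Integrable fun z : V => min (‖x - z‖ ^ γ) (‖z - y‖ ^ γ) * exp (-‖z‖ ^ 2) :=
  (integrable_rpow_norm_sub_mul_exp_neg_sq_norm hγ x).mono' (by fun_prop)
    (.of_forall fun z => by
      rw [norm_of_nonneg (by positivity)]
      gcongr
      exact min_le_left _ _)

end Gaussian

theorem gaussian_coercivity_constant_pos (N : ℕ) (hN : 1 ≤ N) (γ : ℝ) (hγ : 0 ≤ γ)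
    (M : EuclideanSpace ℝ (Fin N) → ℝ)
    (hM : ∀ v, M v = Real.exp (-‖v‖ ^ 2))
    (Kγ : ℝ)
    (hK : Kγ = (1 / (4 * ∫ v, M v)) *
      ⨅ p : EuclideanSpace ℝ (Fin N) × EuclideanSpace ℝ (Fin N),
        ∫ z, min (‖p.1 - z‖ ^ γ) (‖z - p.2‖ ^ γ) * M z) :
    0 < Kγ := by
  obtain rfl : M = fun v => exp (-‖v‖ ^ 2) := funext hM
  have : NeZero N := ⟨by omega⟩
  set c := ∫ v : EuclideanSpace ℝ (Fin N), exp (-‖v‖ ^ 2)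
  have hc : 0 < c := integral_exp_neg_sq_norm_pos
  obtain ⟨r, hr, hball⟩ := exists_pos_forall_addHaar_real_ball_lt
    (volume : Measure (EuclideanSpace ℝ (Fin N))) (by positivity : 0 < c / 4)
  have hlower (p : EuclideanSpace ℝ (Fin N) × EuclideanSpace ℝ (Fin N)) :
      r ^ γ * (c / 2) ≤ ∫ z, min (‖p.1 - z‖ ^ γ) (‖z - p.2‖ ^ γ) * exp (-‖z‖ ^ 2) := by
    obtain ⟨x, y⟩ := p
    refine le_trans ?_ (rpow_mul_sub_setIntegral_ball_le_integral_min_rpow_mul volume hγ hr.le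
      (fun v => (exp_pos _).le) (by simpa using integrable_exp_neg_mul_sq_norm one_pos) x y
      (integrable_min_rpow_norm_sub_mul_exp_neg_sq_norm hγ x y))
    have hx := setIntegral_exp_neg_sq_norm_le_measureReal (μ := volume) (s := ball x r)
      measure_ball_lt_top
    have hy := setIntegral_exp_neg_sq_norm_le_measureReal (μ := volume) (s := ball y r)
      measure_ball_lt_top
    exact mul_le_mul_of_nonneg_left (by linarith [hball x, hball y]) (rpow_nonneg hr.le γ)
  rw [hK]
  exact mul_pos (by positivity)
    ((mul_pos (rpow_pos_of_pos hr γ) (half_pos hc)).trans_le (le_ciInf hlower))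
end
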